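/- Let b ∈ {0,1} and μ₁, μ₂ be random probability pairs, each having a symmetric density with respect to b (b uniform), and suppose b → μ₁ → μ₂ is a Markov chain (μ₂ is conditionally independent of b given μ₁). Write qᵢ = μᵢ(0). Then E[(q₁ − q₂)²] ≤ (ln 2 / 2)·( I(𝖽μ₁) − I(𝖽μ₂) ), where I(𝖽μᵢ) = 1 − E[H₂(qᵢ)] is the mutual-information functional of the density. -/

import Mathlib

open scoped Classical

/-- Probability of an event on a finite space with weights p. -/
noncomputable def pr {Ω : Type} [Fintype Ω] (p : Ω → ℝ) (A : Ω → Prop) : ℝ :=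
  ∑ ω, if A ω then p ω else 0

/-- Binary entropy function (base 2). -/
noncomputable def binEnt (p : ℝ) : ℝ :=
  -(p * Real.logb 2 p) - (1 - p) * Real.logb 2 (1 - p)

/-!
Conditioning on `μ₂`, the Markov property together with the symmetry of both densities gives
`E[q₁ | μ₂] = q₂`. Since `x ↦ H(x) + 2 (x - a)²` (entropy in nats) is concave on `[0, 1]`, its
second derivative being `4 - 1 / (x (1 - x)) ≤ 0`, Jensen's inequality on each fibre `{μ₂ = l}`
with `a = l 0` gives `E[2 (q₁ - q₂)² + H(q₁)] ≤ E[H(q₂)]`; dividing by `ln 2` passes to bits.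
-/

open Finset Real

section Probability

variable {Ω : Type} [Fintype Ω] (p : Ω → ℝ)

lemma pr_eq_sum_filter (A : Ω → Prop) : pr p A = ∑ ω with A ω, p ω :=
  (sum_filter _ _).symm

variable {p}

lemma pr_nonneg (hp : ∀ ω, 0 ≤ p ω) (A : Ω → Prop) : 0 ≤ pr p A := by
  rw [pr_eq_sum_filter]
  exact sum_nonneg fun ω _ => hp ω

lemma pr_mono (hp : ∀ ω, 0 ≤ p ω) {A B : Ω → Prop} (h : ∀ ω, A ω → B ω) : pr p A ≤ pr p B := by
  rw [pr_eq_sum_filter, pr_eq_sum_filter]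
  exact sum_le_sum_of_subset_of_nonneg (monotone_filter_right _ fun ω _ => h ω) fun ω _ _ => hp ω

lemma sum_image_mul_pr_and {α : Type*} (f : Ω → α) (g : α → ℝ) (B : Ω → Prop) :
    ∑ x ∈ univ.image f, g x * pr p (fun ω => f ω = x ∧ B ω) = ∑ ω with B ω, g (f ω) * p ω := by
  rw [← sum_fiberwise_of_maps_to (g := f) fun ω _ => mem_image_of_mem f (mem_univ ω)]
  refine sum_congr rfl fun x _ => ?_
  rw [pr_eq_sum_filter, mul_sum, filter_filter]
  refine sum_congr (by simp only [and_comm]) fun ω hω => ?_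
  rw [(mem_filter.1 hω).2.2, mul_comm]

lemma sum_image_pr_and {α : Type*} (f : Ω → α) (B : Ω → Prop) :
    ∑ x ∈ univ.image f, pr p (fun ω => f ω = x ∧ B ω) = pr p B := by
  simpa [pr_eq_sum_filter] using sum_image_mul_pr_and f (fun _ => 1) B

lemma pr_and_and_eq_of_condIndep (hp : ∀ ω, 0 ≤ p ω) {A C E : Ω → Prop} {t : ℝ}
    (hE : pr p (fun ω => A ω ∧ E ω) = t * pr p A)
    (hCE : pr p (fun ω => A ω ∧ C ω ∧ E ω) * pr p A
      = pr p (fun ω => A ω ∧ C ω) * pr p (fun ω => A ω ∧ E ω)) :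
    pr p (fun ω => A ω ∧ C ω ∧ E ω) = t * pr p (fun ω => A ω ∧ C ω) := by
  by_cases hA : pr p A = 0
  · have null : ∀ D : Ω → Prop, pr p (fun ω => A ω ∧ D ω) = 0 := fun D =>
      le_antisymm (hA ▸ pr_mono hp fun _ h => h.1) (pr_nonneg hp _)
    rw [null, null, mul_zero]
  · apply mul_right_cancel₀ hA
    rw [hCE, hE]
    ring

end Probability

lemma ConcaveOn.sum_mul_le_of_sum_mul_eq {ι : Type*} {s : Set ℝ} {f : ℝ → ℝ}
    (hf : ConcaveOn ℝ s f) {t : Finset ι} {w x : ι → ℝ} {a : ℝ}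
    (hw : ∀ i ∈ t, 0 ≤ w i) (hx : ∀ i ∈ t, x i ∈ s)
    (hmean : ∑ i ∈ t, w i * x i = a * ∑ i ∈ t, w i) :
    ∑ i ∈ t, w i * f (x i) ≤ (∑ i ∈ t, w i) * f a := by
  rcases (sum_nonneg hw).eq_or_lt with hzero | hpos
  · have hw0 : ∀ i ∈ t, w i = 0 := (sum_eq_zero_iff_of_nonneg hw).1 hzero.symm
    rw [← hzero, zero_mul]
    exact (sum_eq_zero fun i hi => by rw [hw0 i hi, zero_mul]).le
  · have hcenter : t.centerMass w x = a := by
      rw [centerMass, smul_eq_mul, inv_mul_eq_iff_eq_mul₀ hpos.ne']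
      simpa [mul_comm] using hmean
    have := hf.le_map_centerMass hw hpos hx
    rw [hcenter, centerMass, smul_eq_mul, inv_mul_le_iff₀ hpos] at this
    simpa using this

lemma concaveOn_binEntropy_add_two_mul_sq (a : ℝ) :
    ConcaveOn ℝ (Set.Icc 0 1) fun x => binEntropy x + 2 * (x - a) ^ 2 := by
  refine concaveOn_of_hasDerivWithinAt2_nonpos (convex_Icc 0 1) (by fun_prop)
    (f' := fun x => log (1 - x) - log x + 4 * (x - a)) (f'' := fun x => -(1 - x)⁻¹ - x⁻¹ + 4)
    ?_ ?_ ?_ <;> rw [interior_Icc] <;> rintro x ⟨hx0, hx1⟩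
  · exact ((hasDerivAt_binEntropy hx0.ne' hx1.ne).add
      ((((hasDerivAt_id x).sub_const a).pow 2).const_mul 2) |>.congr_deriv (by simp; ring))
      |>.hasDerivWithinAt
  · exact (((((hasDerivAt_id x).const_sub 1).log (sub_pos.2 hx1).ne').sub
      ((hasDerivAt_id x).log hx0.ne')).add (((hasDerivAt_id x).sub_const a).const_mul 4)
      |>.congr_deriv (by simp; ring)).hasDerivWithinAt
  · have hx : 0 < x * (1 - x) := mul_pos hx0 (sub_pos.2 hx1)
    have hinv : (1 - x)⁻¹ + x⁻¹ = (x * (1 - x))⁻¹ := by field_simp; ring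
    have key : 4 ≤ (1 - x)⁻¹ + x⁻¹ := by
      rw [hinv, le_inv_comm₀ (by norm_num) hx]
      nlinarith [sq_nonneg (1 - 2 * x)]
    linarith

lemma binEnt_eq_binEntropy_div_log_two (x : ℝ) : binEnt x = binEntropy x / log 2 := by
  rw [binEnt, binEntropy, log_inv, log_inv, logb, logb]
  ring

lemma sum_mul_two_mul_sq_add_binEntropy_le {Ω α : Type*} [Fintype Ω] {p : Ω → ℝ}
    (hp : ∀ ω, 0 ≤ p ω) (Y : Ω → α) {x : Ω → ℝ} (g : α → ℝ) (hx : ∀ ω, x ω ∈ Set.Icc 0 1)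
    (hmean : ∀ y, ∑ ω with Y ω = y, p ω * x ω = g y * ∑ ω with Y ω = y, p ω) :
    ∑ ω, p ω * (2 * (x ω - g (Y ω)) ^ 2 + binEntropy (x ω))
      ≤ ∑ ω, p ω * binEntropy (g (Y ω)) := by
  have hY : ∀ ω ∈ univ, Y ω ∈ univ.image Y := fun ω _ => mem_image_of_mem Y (mem_univ ω)
  rw [← sum_fiberwise_of_maps_to hY, ← sum_fiberwise_of_maps_to hY]
  refine sum_le_sum fun y _ => ?_
  have hfibre : ∀ F : ℝ → ℝ → ℝ, ∑ ω with Y ω = y, p ω * F (x ω) (g (Y ω))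
      = ∑ ω with Y ω = y, p ω * F (x ω) (g y) :=
    fun F => sum_congr rfl fun ω hω => by rw [(mem_filter.1 hω).2]
  have hJensen := (concaveOn_binEntropy_add_two_mul_sq (g y)).sum_mul_le_of_sum_mul_eq
    (fun ω _ => hp ω) (fun ω _ => hx ω) (hmean y)
  rw [hfibre (fun u v => 2 * (u - v) ^ 2 + binEntropy u), hfibre (fun _ v => binEntropy v),
    ← sum_mul]
  simpa [add_comm] using hJensen

lemma sum_filter_mul_eq_of_markov {Ω β : Type} [Fintype Ω] {p : Ω → ℝ} (hp : ∀ ω, 0 ≤ p ω)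
    {b : Ω → β} {μ₁ μ₂ : Ω → β → ℝ} {c : β}
    (hsym₁ : ∀ l, pr p (fun ω => μ₁ ω = l ∧ b ω = c) = l c * pr p (fun ω => μ₁ ω = l))
    (hsym₂ : ∀ l, pr p (fun ω => μ₂ ω = l ∧ b ω = c) = l c * pr p (fun ω => μ₂ ω = l))
    (hmarkov : ∀ l₁ l₂,
      pr p (fun ω => μ₁ ω = l₁ ∧ μ₂ ω = l₂ ∧ b ω = c) * pr p (fun ω => μ₁ ω = l₁)
        = pr p (fun ω => μ₁ ω = l₁ ∧ μ₂ ω = l₂) * pr p (fun ω => μ₁ ω = l₁ ∧ b ω = c))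
    (l : β → ℝ) :
    ∑ ω with μ₂ ω = l, p ω * μ₁ ω c = l c * ∑ ω with μ₂ ω = l, p ω := by
  calc ∑ ω with μ₂ ω = l, p ω * μ₁ ω c
      = ∑ l₁ ∈ univ.image μ₁, l₁ c * pr p (fun ω => μ₁ ω = l₁ ∧ μ₂ ω = l) := by
        rw [sum_image_mul_pr_and]
        simp only [mul_comm]
    _ = ∑ l₁ ∈ univ.image μ₁, pr p (fun ω => μ₁ ω = l₁ ∧ μ₂ ω = l ∧ b ω = c) :=
        sum_congr rfl fun l₁ _ => (pr_and_and_eq_of_condIndep hp (hsym₁ l₁) (hmarkov l₁ l)).symm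
    _ = l c * ∑ ω with μ₂ ω = l, p ω := by
        rw [sum_image_pr_and, hsym₂, pr_eq_sum_filter]

theorem stmt10_general {Ω : Type} [Fintype Ω] (p : Ω → ℝ) (hp : ∀ ω, 0 ≤ p ω)
    (b : Ω → ZMod 2) (μ₁ μ₂ : Ω → ZMod 2 → ℝ)
    (hμ₁0 : ∀ ω c, 0 ≤ μ₁ ω c) (hμ₁1 : ∀ ω, μ₁ ω 0 + μ₁ ω 1 = 1)
    (hsym₁ : ∀ (l : ZMod 2 → ℝ) (c : ZMod 2),
      pr p (fun ω => μ₁ ω = l ∧ b ω = c) = l c * pr p (fun ω => μ₁ ω = l))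
    (hsym₂ : ∀ (l : ZMod 2 → ℝ) (c : ZMod 2),
      pr p (fun ω => μ₂ ω = l ∧ b ω = c) = l c * pr p (fun ω => μ₂ ω = l))
    (hmarkov : ∀ (l₁ l₂ : ZMod 2 → ℝ) (c : ZMod 2),
      pr p (fun ω => μ₁ ω = l₁ ∧ μ₂ ω = l₂ ∧ b ω = c) * pr p (fun ω => μ₁ ω = l₁)
        = pr p (fun ω => μ₁ ω = l₁ ∧ μ₂ ω = l₂) * pr p (fun ω => μ₁ ω = l₁ ∧ b ω = c)) :
    ∑ ω, p ω * (μ₁ ω 0 - μ₂ ω 0) ^ 2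
      ≤ (Real.log 2 / 2) *
        ((1 - ∑ ω, p ω * binEnt (μ₁ ω 0)) - (1 - ∑ ω, p ω * binEnt (μ₂ ω 0))) := by
  have hq₁ : ∀ ω, μ₁ ω 0 ∈ Set.Icc 0 1 := fun ω => ⟨hμ₁0 ω 0, by linarith [hμ₁1 ω, hμ₁0 ω 1]⟩
  have key := sum_mul_two_mul_sq_add_binEntropy_le hp μ₂ (· 0) hq₁
    (sum_filter_mul_eq_of_markov hp (fun l => hsym₁ l 0) (fun l => hsym₂ l 0)
      (fun l₁ l₂ => hmarkov l₁ l₂ 0))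
  have hent : ∀ μ : Ω → ZMod 2 → ℝ,
      ∑ ω, p ω * binEnt (μ ω 0) = (∑ ω, p ω * binEntropy (μ ω 0)) / log 2 := fun μ => by
    simp only [binEnt_eq_binEntropy_div_log_two, sum_div, mul_div_assoc]
  simp only [mul_add, sum_add_distrib, mul_left_comm _ (2 : ℝ), ← mul_sum] at key
  rw [hent, hent]
  field_simp
  linarith

/-- If b is uniform binary, μ₁ and μ₂ are random probability pairs with
symmetric densities w.r.t. b, and b → μ₁ → μ₂ is a Markov chain, then
E[(q₁ − q₂)²] ≤ (ln 2/2)·(I(𝖽μ₁) − I(𝖽μ₂)) where qᵢ = μᵢ(0) and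
I(𝖽μᵢ) = 1 − E[H₂(qᵢ)]. -/
theorem stmt10 {Ω : Type} [Fintype Ω] (p : Ω → ℝ) (hp : ∀ ω, 0 ≤ p ω)
    (hsum : ∑ ω, p ω = 1)
    (b : Ω → ZMod 2) (μ₁ μ₂ : Ω → ZMod 2 → ℝ)
    (hμ₁0 : ∀ ω c, 0 ≤ μ₁ ω c) (hμ₁1 : ∀ ω, μ₁ ω 0 + μ₁ ω 1 = 1)
    (hμ₂0 : ∀ ω c, 0 ≤ μ₂ ω c) (hμ₂1 : ∀ ω, μ₂ ω 0 + μ₂ ω 1 = 1)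
    (hb : ∀ c : ZMod 2, pr p (fun ω => b ω = c) = 1 / 2)
    (hsym₁ : ∀ (l : ZMod 2 → ℝ) (c : ZMod 2),
      pr p (fun ω => μ₁ ω = l ∧ b ω = c) = l c * pr p (fun ω => μ₁ ω = l))
    (hsym₂ : ∀ (l : ZMod 2 → ℝ) (c : ZMod 2),
      pr p (fun ω => μ₂ ω = l ∧ b ω = c) = l c * pr p (fun ω => μ₂ ω = l))
    (hmarkov : ∀ (l₁ l₂ : ZMod 2 → ℝ) (c : ZMod 2),
      pr p (fun ω => μ₁ ω = l₁ ∧ μ₂ ω = l₂ ∧ b ω = c) * pr p (fun ω => μ₁ ω = l₁)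
        = pr p (fun ω => μ₁ ω = l₁ ∧ μ₂ ω = l₂) * pr p (fun ω => μ₁ ω = l₁ ∧ b ω = c)) :
    ∑ ω, p ω * (μ₁ ω 0 - μ₂ ω 0) ^ 2
      ≤ (Real.log 2 / 2) *
        ((1 - ∑ ω, p ω * binEnt (μ₁ ω 0)) - (1 - ∑ ω, p ω * binEnt (μ₂ ω 0))) :=
  stmt10_general p hp b μ₁ μ₂ hμ₁0 hμ₁1 hsym₁ hsym₂ hmarkov
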